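/- Let $V : \mathcal{F} \to \mathbb{R}$, $u : X \to \mathbb{R}$, and suppose $V(f) = \Phi(u \circ f) + \int u(f)\, dm$ for all $f \in \mathcal{F}$, where $m$ is a finitely additive probability on an algebra $\mathcal{A} \supseteq \mathcal{A}_u$ with every $u \circ f \in L^1(m)$, and $\Phi$ is a positive linear functional on the span of $\{u \circ f : f \in \mathcal{F}\}$ vanishing on bounded functions. If in addition $\lim_{m(A) \to 0} V(f \text{ restricted to } A^c \text{ patched with } x) = V(f)$ for every $f$ (i.e., for every sequence $A_n \in \mathcal{A}$ with $m(A_n) \to 0$, $V(f A_n^c x) \to V(f)$, where $fA^c x$ equals $f$ on $A^c$ and the constant $x$ on $A$, and $u(x)=0$), then $\Phi(u \circ f) = 0$ for all $f$, so $V(f) = \int u(f)\, dm$. -/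

import Mathlib

open MeasureTheory

/-- An algebra of subsets of `Ω`. -/
structure SetAlgebra (Ω : Type*) where
  sets : Set (Set Ω)
  empty_mem : ∅ ∈ sets
  compl_mem : ∀ A ∈ sets, Aᶜ ∈ sets
  union_mem : ∀ A ∈ sets, ∀ B ∈ sets, A ∪ B ∈ sets

/-- A finitely additive probability on an algebra of sets. -/
structure FinAddProb {Ω : Type*} (𝒜 : SetAlgebra Ω) where
  toFun : Set Ω → ℝ
  nonneg : ∀ A, 0 ≤ toFun A
  empty : toFun ∅ = 0
  univ : toFun Set.univ = 1
  mono : ∀ A ∈ 𝒜.sets, ∀ B ∈ 𝒜.sets, A ⊆ B → toFun A ≤ toFun B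
  additive : ∀ A ∈ 𝒜.sets, ∀ B ∈ 𝒜.sets, Disjoint A B → toFun (A ∪ B) = toFun A + toFun B

/-- The (Choquet-type) integral of a function `h` with respect to a monotone set
function `m` with `m Ω = 1`: for finitely additive probabilities and bounded measurable
`h` this is the Dunford–Schwartz integral `∫ h dm`. -/
noncomputable def faInt {Ω : Type*} (m : Set Ω → ℝ) (h : Ω → ℝ) : ℝ :=
  (∫ t in Set.Ioi (0 : ℝ), m {ω | t < h ω}) +
    ∫ t in Set.Iio (0 : ℝ), (m {ω | t < h ω} - 1)

/-- `h` is measurable with respect to the algebra `𝒜`. -/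
def AMeasurable {Ω : Type*} (𝒜 : SetAlgebra Ω) (h : Ω → ℝ) : Prop :=
  ∀ t : ℝ, {ω | t < h ω} ∈ 𝒜.sets ∧ {ω | h ω < t} ∈ 𝒜.sets

/-- `h` is bounded. -/
def IsBdd {Ω : Type*} (h : Ω → ℝ) : Prop := ∃ c : ℝ, ∀ ω, |h ω| ≤ c

open Filter
open scoped Classical

/-- `h` is integrable with respect to the finitely additive probability `m`. -/
def FAIntegrable {Ω : Type*} (m : Set Ω → ℝ) (h : Ω → ℝ) : Prop :=
  IntegrableOn (fun t : ℝ => m {ω | t < h ω}) (Set.Ioi 0) volume ∧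
  IntegrableOn (fun t : ℝ => m {ω | t < h ω} - 1) (Set.Iio 0) volume

/-!
Truncate an act `f` to the reference outcome `x` on `Aₙ = {n < |u ∘ f|}`. The utility profile of
the truncated act is bounded by `n`, so the bubble `Φ` vanishes on it and `V` equals its integral.
Integrability of `u ∘ f` forces `m(Aₙ) → 0`, and the two distribution functions differ by at
most `m(Aₙ)`, so dominated convergence makes these integrals converge to `∫ u(f) dm`, while
continuity makes them converge to `V f`. Hence `V f = ∫ u(f) dm` and `Φ(u ∘ f) = 0`.
-/

open Set Topology

namespace SetAlgebra

variable {Ω : Type*} (𝒜 : SetAlgebra Ω)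

theorem univ_mem : univ ∈ 𝒜.sets := by
  simpa using 𝒜.compl_mem ∅ 𝒜.empty_mem

theorem inter_mem {A B : Set Ω} (hA : A ∈ 𝒜.sets) (hB : B ∈ 𝒜.sets) : A ∩ B ∈ 𝒜.sets := by
  rw [← compl_compl (A ∩ B), compl_inter]
  exact 𝒜.compl_mem _ (𝒜.union_mem _ (𝒜.compl_mem A hA) _ (𝒜.compl_mem B hB))

end SetAlgebra

namespace FinAddProb

variable {Ω : Type*} {𝒜 : SetAlgebra Ω} (m : FinAddProb 𝒜)

theorem le_one {A : Set Ω} (hA : A ∈ 𝒜.sets) : m.toFun A ≤ 1 :=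
  m.univ ▸ m.mono A hA Set.univ 𝒜.univ_mem (subset_univ A)

theorem compl_eq {A : Set Ω} (hA : A ∈ 𝒜.sets) : m.toFun Aᶜ = 1 - m.toFun A := by
  have := m.additive A hA Aᶜ (𝒜.compl_mem A hA) disjoint_compl_right
  rw [union_compl_self, m.univ] at this
  linarith

theorem union_le {A B : Set Ω} (hA : A ∈ 𝒜.sets) (hB : B ∈ 𝒜.sets) :
    m.toFun (A ∪ B) ≤ m.toFun A + m.toFun B := by
  have hBA : B ∩ Aᶜ ∈ 𝒜.sets := 𝒜.inter_mem hB (𝒜.compl_mem A hA)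
  have hsplit : A ∪ B = A ∪ (B ∩ Aᶜ) := by rw [union_inter_distrib_left, union_compl_self,
    inter_univ]
  rw [hsplit, m.additive A hA _ hBA (disjoint_compl_right.mono_right inter_subset_right)]
  linarith [m.mono _ hBA B hB inter_subset_left]

theorem abs_sub_le_of_subset_union {A B C : Set Ω} (hA : A ∈ 𝒜.sets) (hB : B ∈ 𝒜.sets)
    (hC : C ∈ 𝒜.sets) (hBC : B ⊆ C ∪ A) (hCB : C ⊆ B ∪ A) :
    |m.toFun B - m.toFun C| ≤ m.toFun A := by
  have h₁ := (m.mono _ hB _ (𝒜.union_mem _ hC _ hA) hBC).trans (m.union_le hC hA)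
  have h₂ := (m.mono _ hC _ (𝒜.union_mem _ hB _ hA) hCB).trans (m.union_le hB hA)
  rw [abs_le]
  constructor <;> linarith

end FinAddProb

theorem Antitone.tendsto_atTop_zero_of_integrableOn_Ioi {G : ℝ → ℝ} (hG : Antitone G)
    (h0 : ∀ t, 0 ≤ G t) {a : ℝ} (hI : IntegrableOn G (Ioi a)) : Tendsto G atTop (𝓝 0) := by
  have hlim := tendsto_atTop_ciInf hG ⟨0, by rintro _ ⟨t, rfl⟩; exact h0 t⟩
  suffices ⨅ t, G t = 0 by rwa [this] at hlim
  refine IntegrableAtFilter.eq_zero_of_tendsto ⟨Ioi a, Ioi_mem_atTop a, hI⟩ (fun s hs => ?_) hlim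
  obtain ⟨b, hb⟩ := mem_atTop_sets.1 hs
  rw [← top_le_iff, ← Real.volume_Ici (a := b)]
  exact measure_mono hb

theorem tendsto_setIntegral_of_abs_sub_le {α : Type*} [MeasurableSpace α] {μ : Measure α}
    {s : Set α} (hs : MeasurableSet s) {F : ℕ → α → ℝ} {f bound : α → ℝ} {ε : ℕ → ℝ}
    (hF : ∀ n, AEStronglyMeasurable (F n) (μ.restrict s)) (hbound : IntegrableOn bound s μ)
    (hFbound : ∀ n, ∀ t ∈ s, |F n t| ≤ bound t) (hFf : ∀ n, ∀ t ∈ s, |F n t - f t| ≤ ε n)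
    (hε : Tendsto ε atTop (𝓝 0)) :
    Tendsto (fun n => ∫ t in s, F n t ∂μ) atTop (𝓝 (∫ t in s, f t ∂μ)) := by
  refine tendsto_integral_of_dominated_convergence bound hF hbound (fun n => ?_) ?_
  · filter_upwards [ae_restrict_mem hs] with t ht using hFbound n t ht
  · filter_upwards [ae_restrict_mem hs] with t ht
    exact tendsto_iff_dist_tendsto_zero.2
      (squeeze_zero (fun _ => dist_nonneg) (fun n => (Real.dist_eq _ _).le.trans (hFf n t ht)) hε)

section Truncation

variable {Ω : Type*} {A : Set Ω} {h : Ω → ℝ} {t : ℝ}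

theorem setOf_lt_subset_union_of_eqOn_compl {h' : Ω → ℝ} (hEq : EqOn h h' Aᶜ) :
    {ω | t < h ω} ⊆ {ω | t < h' ω} ∪ A := fun ω hω => by
  by_cases hωA : ω ∈ A
  · exact Or.inr hωA
  · exact Or.inl (show t < h' ω from hEq hωA ▸ hω)

theorem setOf_lt_indicator_compl_subset (ht : 0 ≤ t) :
    {ω | t < Aᶜ.indicator h ω} ⊆ {ω | t < h ω} := fun ω hω => by
  by_cases hωA : ω ∈ A
  · simp only [mem_ofPred_eq, indicator_of_notMem (notMem_compl_iff.2 hωA)] at hω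
    linarith
  · simp_all

theorem setOf_lt_subset_indicator_compl (ht : t < 0) :
    {ω | t < h ω} ⊆ {ω | t < Aᶜ.indicator h ω} := fun ω hω => by
  by_cases hωA : ω ∈ A <;> simp_all

theorem abs_indicator_compl_setOf_lt_abs_le {c : ℝ} (hc : 0 ≤ c) (ω : Ω) :
    |{ω | c < |h ω|}ᶜ.indicator h ω| ≤ c := by
  by_cases hω : c < |h ω|
  · simp [hω, hc]
  · simp_all

end Truncation

namespace FinAddProb

variable {Ω : Type*} {𝒜 : SetAlgebra Ω} (m : FinAddProb 𝒜) {h : Ω → ℝ}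

theorem antitone_setOf_lt (hh : ∀ t, {ω | t < h ω} ∈ 𝒜.sets) :
    Antitone fun t => m.toFun {ω | t < h ω} :=
  fun _ _ hst => m.mono _ (hh _) _ (hh _) fun _ hω => lt_of_le_of_lt hst hω

theorem tendsto_measure_lt_abs_atTop (hh : ∀ t, {ω | t < h ω} ∈ 𝒜.sets)
    (habs : ∀ k, {ω | k < |h ω|} ∈ 𝒜.sets) (hint : FAIntegrable m.toFun h) :
    Tendsto (fun k => m.toFun {ω | k < |h ω|}) atTop (𝓝 0) := by
  set G := fun t => m.toFun {ω | t < h ω}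
  have hupper : Tendsto G atTop (𝓝 0) :=
    (m.antitone_setOf_lt hh).tendsto_atTop_zero_of_integrableOn_Ioi (fun _ => m.nonneg _) hint.1
  have hlower : Tendsto (fun t => 1 - G (-t)) atTop (𝓝 0) := by
    refine Antitone.tendsto_atTop_zero_of_integrableOn_Ioi
      (fun s t hst => sub_le_sub_left (m.antitone_setOf_lt hh (neg_le_neg hst)) 1)
      (fun t => sub_nonneg.2 (m.le_one (hh _))) (a := 0) ?_
    have hreflect : IntegrableOn (fun t => G (-t) - 1) (Ioi 0) :=
      IntegrableOn.comp_neg_Ioi (μ := volume) (c := 0) (f := fun t => G t - 1)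
        (by simpa using hint.2)
    simpa only [Pi.neg_def, neg_sub] using hreflect.neg
  have hsum : Tendsto (fun k => G k + (1 - G (-k))) atTop (𝓝 0) := by
    simpa using hupper.add hlower
  refine squeeze_zero (fun _ => m.nonneg _) (fun k => ?_) hsum
  have hsub : {ω | k < |h ω|} ⊆ {ω | k < h ω} ∪ {ω | -k < h ω}ᶜ := fun ω hω => by
    rcases lt_abs.1 (show k < |h ω| from hω) with hω | hω
    · exact Or.inl hω
    · exact Or.inr (by simp only [mem_compl_iff, mem_ofPred_eq, not_lt]; linarith)
  calc m.toFun {ω | k < |h ω|}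
      ≤ m.toFun ({ω | k < h ω} ∪ {ω | -k < h ω}ᶜ) :=
        m.mono _ (habs k) _ (𝒜.union_mem _ (hh k) _ (𝒜.compl_mem _ (hh (-k)))) hsub
    _ ≤ G k + (1 - G (-k)) := by
        rw [← m.compl_eq (hh (-k))]
        exact m.union_le (hh k) (𝒜.compl_mem _ (hh (-k)))

theorem tendsto_faInt_indicator_compl {A : ℕ → Set Ω} (hA : ∀ n, A n ∈ 𝒜.sets)
    (hmA : Tendsto (fun n => m.toFun (A n)) atTop (𝓝 0))
    (hh : ∀ t, {ω | t < h ω} ∈ 𝒜.sets) (hhA : ∀ n t, {ω | t < (A n)ᶜ.indicator h ω} ∈ 𝒜.sets)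
    (hint : FAIntegrable m.toFun h) :
    Tendsto (fun n => faInt m.toFun ((A n)ᶜ.indicator h)) atTop (𝓝 (faInt m.toFun h)) := by
  have hclose : ∀ n t,
      |m.toFun {ω | t < (A n)ᶜ.indicator h ω} - m.toFun {ω | t < h ω}| ≤ m.toFun (A n) :=
    fun n t => m.abs_sub_le_of_subset_union (hA n) (hhA n t) (hh t)
      (setOf_lt_subset_union_of_eqOn_compl eqOn_indicator)
      (setOf_lt_subset_union_of_eqOn_compl eqOn_indicator.symm)
  refine Tendsto.add ?_ ?_
  · refine tendsto_setIntegral_of_abs_sub_le measurableSet_Ioi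
      (fun n => (m.antitone_setOf_lt (hhA n)).measurable.aestronglyMeasurable) hint.1
      (fun n t ht => ?_) (fun n t _ => hclose n t) hmA
    rw [abs_of_nonneg (m.nonneg _)]
    exact m.mono _ (hhA n t) _ (hh t) (setOf_lt_indicator_compl_subset (le_of_lt ht))
  · refine tendsto_setIntegral_of_abs_sub_le measurableSet_Iio
      (fun n => ((m.antitone_setOf_lt (hhA n)).measurable.sub_const 1).aestronglyMeasurable)
      hint.2.norm (fun n t ht => ?_) (fun n t _ => by simpa using hclose n t) hmA
    rw [Real.norm_eq_abs, abs_of_nonpos (sub_nonpos.2 (m.le_one (hhA n t))),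
      abs_of_nonpos (sub_nonpos.2 (m.le_one (hh t)))]
    linarith [m.mono _ (hh t) _ (hhA n t) (setOf_lt_subset_indicator_compl ht)]

end FinAddProb

theorem continuity_kills_bubble_general {Ω X : Type*} (𝒜 : SetAlgebra Ω) (m : FinAddProb 𝒜)
    (F : Set (Ω → X)) (V : (Ω → X) → ℝ) (u : X → ℝ) (x : X) (hux : u x = 0)
    (hclose : ∀ f ∈ F, ∀ A ∈ 𝒜.sets, (fun ω => if ω ∈ A then x else f ω) ∈ F)
    (hmeas : ∀ f ∈ F, AMeasurable 𝒜 (fun ω => u (f ω)) ∧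
      (∀ k : ℝ, {ω | k < |u (f ω)|} ∈ 𝒜.sets) ∧
      FAIntegrable m.toFun (fun ω => u (f ω)))
    (Φ : (Ω → ℝ) →ₗ[ℝ] ℝ)
    (hΦbdd : ∀ g ∈ Submodule.span ℝ {g : Ω → ℝ | ∃ f ∈ F, g = fun ω => u (f ω)},
      (∃ c : ℝ, ∀ ω, |g ω| ≤ c) → Φ g = 0)
    (hrep : ∀ f ∈ F, V f = Φ (fun ω => u (f ω)) + faInt m.toFun (fun ω => u (f ω)))
    (hcont : ∀ f ∈ F, ∀ A : ℕ → Set Ω, (∀ n, A n ∈ 𝒜.sets) →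
      Tendsto (fun n => m.toFun (A n)) atTop (nhds 0) →
      Tendsto (fun n => V (fun ω => if ω ∈ A n then x else f ω)) atTop (nhds (V f))) :
    ∀ f ∈ F, Φ (fun ω => u (f ω)) = 0 ∧ V f = faInt m.toFun (fun ω => u (f ω)) := by
  intro f hf
  obtain ⟨hmeasf, habs, hint⟩ := hmeas f hf
  set g : Ω → ℝ := fun ω => u (f ω)
  set A : ℕ → Set Ω := fun n => {ω | (n : ℝ) < |g ω|}
  set fA : ℕ → Ω → X := fun n ω => if ω ∈ A n then x else f ω
  have hA : ∀ n, A n ∈ 𝒜.sets := fun n => habs n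
  have hfA : ∀ n, fA n ∈ F := fun n => hclose f hf (A n) (hA n)
  have hgA : ∀ n, (fun ω => u (fA n ω)) = (A n)ᶜ.indicator g := fun n => by
    ext ω
    by_cases hω : ω ∈ A n <;> simp [fA, hω, hux, g]
  have hmA : Tendsto (fun n => m.toFun (A n)) atTop (𝓝 0) :=
    (m.tendsto_measure_lt_abs_atTop (fun t => (hmeasf t).1) habs hint).comp
      tendsto_natCast_atTop_atTop
  have hVA : ∀ n, V (fA n) = faInt m.toFun ((A n)ᶜ.indicator g) := fun n => by
    have hspan : (A n)ᶜ.indicator g ∈ Submodule.span ℝ {g | ∃ f ∈ F, g = fun ω => u (f ω)} :=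
      Submodule.subset_span ⟨fA n, hfA n, (hgA n).symm⟩
    rw [hrep _ (hfA n), hgA n,
      hΦbdd _ hspan ⟨n, abs_indicator_compl_setOf_lt_abs_le n.cast_nonneg⟩, zero_add]
  have hlim : Tendsto (fun n => V (fA n)) atTop (𝓝 (faInt m.toFun g)) := by
    simp only [hVA]
    exact m.tendsto_faInt_indicator_compl hA hmA (fun t => (hmeasf t).1)
      (fun n t => hgA n ▸ ((hmeas _ (hfA n)).1 t).1) hint
  have hVf : V f = faInt m.toFun g := tendsto_nhds_unique (hcont f hf A hA hmA) hlim
  exact ⟨by linarith [hrep f hf], hVf⟩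

/-- If `V f = Φ(u∘f) + ∫ u(f) dm` with `Φ` a positive linear functional
vanishing on bounded functions of the span of `{u∘f}`, and `V` is continuous with respect
to `m`-small modifications (patching `f` with the reference outcome `x`, `u x = 0`, on
small sets), then `Φ(u∘f) = 0` and `V f = ∫ u(f) dm` for every act `f`. -/
theorem continuity_kills_bubble {Ω X : Type*} (𝒜 : SetAlgebra Ω) (m : FinAddProb 𝒜)
    (F : Set (Ω → X)) (V : (Ω → X) → ℝ) (u : X → ℝ) (x : X) (hux : u x = 0)
    (hclose : ∀ f ∈ F, ∀ A ∈ 𝒜.sets, (fun ω => if ω ∈ A then x else f ω) ∈ F)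
    (hmeas : ∀ f ∈ F, AMeasurable 𝒜 (fun ω => u (f ω)) ∧
      (∀ k : ℝ, {ω | k < |u (f ω)|} ∈ 𝒜.sets) ∧
      FAIntegrable m.toFun (fun ω => u (f ω)))
    (Φ : (Ω → ℝ) →ₗ[ℝ] ℝ)
    (hΦpos : ∀ g ∈ Submodule.span ℝ {g : Ω → ℝ | ∃ f ∈ F, g = fun ω => u (f ω)},
      (∀ ω, 0 ≤ g ω) → 0 ≤ Φ g)
    (hΦbdd : ∀ g ∈ Submodule.span ℝ {g : Ω → ℝ | ∃ f ∈ F, g = fun ω => u (f ω)},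
      (∃ c : ℝ, ∀ ω, |g ω| ≤ c) → Φ g = 0)
    (hrep : ∀ f ∈ F, V f = Φ (fun ω => u (f ω)) + faInt m.toFun (fun ω => u (f ω)))
    (hcont : ∀ f ∈ F, ∀ A : ℕ → Set Ω, (∀ n, A n ∈ 𝒜.sets) →
      Tendsto (fun n => m.toFun (A n)) atTop (nhds 0) →
      Tendsto (fun n => V (fun ω => if ω ∈ A n then x else f ω)) atTop (nhds (V f))) :
    ∀ f ∈ F, Φ (fun ω => u (f ω)) = 0 ∧ V f = faInt m.toFun (fun ω => u (f ω)) :=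
  continuity_kills_bubble_general 𝒜 m F V u x hux hclose hmeas Φ hΦbdd hrep hcont
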